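/- The truncation error t = (L^{qcf} − L^a) u^a satisfies the negative-norm estimate ‖t‖_* ≤ 2 ε^2 |φ''_{2F}| ‖D^3 u^a‖_{ℓ^∞(C̃)}, where ‖t‖_* = sup{ ⟨t, w⟩ : w ∈ V_0, ‖Dw‖_{ℓ^1_ε} = 1 } and C̃ = {−N+2,...,−K+1} ∪ {K+2,...,N+1}. -/

import Mathlib

noncomputable def eps (N : ℤ) : ℝ := 1 / (N : ℝ)

noncomputable def Dd (N : ℤ) (v : ℤ → ℝ) (j : ℤ) : ℝ := (v j - v (j-1)) / eps N

/-- Third backward divided difference. -/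
noncomputable def D3 (N : ℤ) (v : ℤ → ℝ) (j : ℤ) : ℝ :=
  (Dd N v j - 2 * Dd N v (j-1) + Dd N v (j-2)) / (eps N)^2

/-- Linearized atomistic operator. -/
noncomputable def Laop (N : ℤ) (φF φ2F : ℝ) (v : ℤ → ℝ) (j : ℤ) : ℝ :=
  φF * ((-v (j+1) + 2 * v j - v (j-1)) / (eps N)^2) +
  φ2F * ((-v (j+2) + 2 * v j - v (j-2)) / (eps N)^2)

/-- Linearized force-based QC operator. -/
noncomputable def LqcfOp (N K : ℤ) (φF φ2F : ℝ) (v : ℤ → ℝ) (j : ℤ) : ℝ :=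
  if -K ≤ j ∧ j ≤ K then Laop N φF φ2F v j
  else (φF + 4 * φ2F) * ((-v (j+1) + 2 * v j - v (j-1)) / (eps N)^2)

/-- Truncation error `t = (L^{qcf} - L^a)u^a` (zero at the boundary). -/
noncomputable def truncErr (N K : ℤ) (φF φ2F : ℝ) (u : ℤ → ℝ) (j : ℤ) : ℝ :=
  if -N+1 ≤ j ∧ j ≤ N-1 then LqcfOp N K φF φ2F u j - Laop N φF φ2F u j else 0

/-! On the continuum region `K < |j| < N` the truncation error is a forward difference
`t_j = P_{j+1} - P_j` with `P_j = φ''_{2F} ε D³u_{j+1}`, and it vanishes on the atomistic region.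
Summing by parts on each continuum block, anchored at the end where `w_{±N} = 0` so that no
boundary term survives, gives `Σ t_j w_j = Σ (w_j - w_{j-1}) (P_c - P_j)` with `c` the other
end of the block. Each `|P_c - P_j|` is at most `2 ε |φ''_{2F}| ‖D³u‖_{ℓ^∞(C̃)}`, and
`Σ |w_j - w_{j-1}| = ‖Dw‖_{ℓ¹_ε} = 1`. -/

open Finset

section SummationByParts

variable {R : Type*} [CommRing R] (g w : ℤ → R)

theorem sum_Icc_sub_mul_eq_left {a b : ℤ} (hab : a ≤ b + 1) :
    ∑ j ∈ Icc a b, (g (j + 1) - g j) * w j =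
      (g (b + 1) - g a) * w (a - 1) + ∑ j ∈ Icc a b, (w j - w (j - 1)) * (g (b + 1) - g j) := by
  induction a, hab using Int.leInductionDown with
  | base => simp
  | pred a hab ih =>
    rw [← insert_Icc_left_eq_Icc_sub_one (by lia), sum_insert (by simp), sum_insert (by simp), ih]
    simp only [sub_add_cancel]
    ring

theorem sum_Icc_sub_mul_eq_right {a b : ℤ} (hab : a ≤ b + 1) :
    ∑ j ∈ Icc a b, (g (j + 1) - g j) * w j =
      (g (b + 1) - g a) * w (b + 1) -
        ∑ j ∈ Icc (a + 1) (b + 1), (w j - w (j - 1)) * (g j - g a) := by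
  induction b, (show a - 1 ≤ b by lia) using Int.leInduction with
  | base => simp
  | succ b hab ih =>
    rw [← insert_Icc_right_eq_Icc_add_one (by lia), sum_insert (by simp), ih (by lia),
      ← insert_Icc_right_eq_Icc_add_one (by lia : a + 1 ≤ b + 1 + 1), sum_insert (by simp)]
    simp only [add_sub_cancel_right]
    ring

end SummationByParts

section AbelBounds

variable {g w : ℤ → ℝ} {a b : ℤ} {C : ℝ}

theorem abs_sum_Icc_sub_mul_le_of_left_eq_zero (hab : a ≤ b + 1) (hw : w (a - 1) = 0)
    (hg : ∀ j ∈ Icc a b, |g (b + 1) - g j| ≤ C) :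
    |∑ j ∈ Icc a b, (g (j + 1) - g j) * w j| ≤ C * ∑ j ∈ Icc a b, |w j - w (j - 1)| := by
  rw [sum_Icc_sub_mul_eq_left g w hab, hw, mul_zero, zero_add, mul_sum]
  refine (abs_sum_le_sum_abs _ _).trans (sum_le_sum fun j hj => ?_)
  rw [abs_mul, mul_comm C]
  exact mul_le_mul_of_nonneg_left (hg j hj) (abs_nonneg _)

theorem abs_sum_Icc_sub_mul_le_of_right_eq_zero (hab : a ≤ b + 1) (hw : w (b + 1) = 0)
    (hg : ∀ j ∈ Icc (a + 1) (b + 1), |g j - g a| ≤ C) :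
    |∑ j ∈ Icc a b, (g (j + 1) - g j) * w j| ≤
      C * ∑ j ∈ Icc (a + 1) (b + 1), |w j - w (j - 1)| := by
  rw [sum_Icc_sub_mul_eq_right g w hab, hw, mul_zero, zero_sub, abs_neg, mul_sum]
  refine (abs_sum_le_sum_abs _ _).trans (sum_le_sum fun j hj => ?_)
  rw [abs_mul, mul_comm C]
  exact mul_le_mul_of_nonneg_left (hg j hj) (abs_nonneg _)

end AbelBounds

theorem eps_pos {N : ℤ} (hN : 0 < N) : 0 < eps N := by
  unfold eps
  positivity

theorem eps_mul_abs_Dd {N : ℤ} (hN : 0 < N) (w : ℤ → ℝ) (j : ℤ) :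
    eps N * |Dd N w j| = |w j - w (j - 1)| := by
  rw [Dd, abs_div, abs_of_pos (eps_pos hN), mul_div_cancel₀ _ (eps_pos hN).ne']

noncomputable def truncPrimitive (N : ℤ) (φ2F : ℝ) (u : ℤ → ℝ) (j : ℤ) : ℝ :=
  φ2F * eps N * D3 N u (j + 1)

section TruncErr

variable {N K : ℤ} {φF φ2F : ℝ} {u : ℤ → ℝ} {j : ℤ}

theorem truncErr_eq_zero_of_mem_atomistic (h : -K ≤ j ∧ j ≤ K) :
    truncErr N K φF φ2F u j = 0 := by
  simp only [truncErr, LqcfOp, if_pos h, sub_self, ite_self]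

theorem truncErr_eq_sub (hK : 0 ≤ K) (hj : j ∈ Icc (-N + 1) (-K - 1) ∪ Icc (K + 1) (N - 1)) :
    truncErr N K φF φ2F u j = truncPrimitive N φ2F u (j + 1) - truncPrimitive N φ2F u j := by
  simp only [mem_union, mem_Icc] at hj
  have hN : (N : ℝ) ≠ 0 := by norm_cast; lia
  rw [truncErr, if_pos ⟨by lia, by lia⟩, LqcfOp, if_neg (by lia)]
  rw [truncPrimitive, truncPrimitive, show j + 1 + 1 = j + 2 by ring]
  simp only [Laop, D3, Dd, eps, show j + 2 - 1 = j + 1 by ring, show j + 2 - 2 = j by ring,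
    add_sub_cancel_right, show j + 1 - 2 = j - 1 by ring, show j - 1 - 1 = j - 2 by ring]
  field_simp
  ring

theorem sum_truncErr_mul_eq (hK : 0 ≤ K) (w : ℤ → ℝ) :
    ∑ j ∈ Icc (-N) N, truncErr N K φF φ2F u j * w j =
      ∑ j ∈ Icc (-N + 1) (-K - 1), truncErr N K φF φ2F u j * w j +
        ∑ j ∈ Icc (K + 1) (N - 1), truncErr N K φF φ2F u j * w j := by
  rw [← sum_union (disjoint_left.mpr fun x hx hx' => by simp only [mem_Icc] at hx hx'; lia)]
  refine (sum_subset (fun x => by simp only [mem_union, mem_Icc]; lia) fun j hj hj' => ?_).symm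
  simp only [mem_union, mem_Icc] at hj hj'
  by_cases h : -K ≤ j ∧ j ≤ K
  · rw [truncErr_eq_zero_of_mem_atomistic h, zero_mul]
  · rw [truncErr, if_neg (by lia), zero_mul]

section Bounds

variable {M : ℝ} (hM : ∀ j ∈ Icc (-N + 2) (-K + 1) ∪ Icc (K + 2) (N + 1), |D3 N u j| ≤ M)
include hM

theorem abs_truncPrimitive_le (hN : 0 < N) (hj : j ∈ Icc (-N + 1) (-K) ∪ Icc (K + 1) N) :
    |truncPrimitive N φ2F u j| ≤ eps N * |φ2F| * M := by
  rw [truncPrimitive, abs_mul, abs_mul, abs_of_pos (eps_pos hN), mul_comm |φ2F|]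
  refine mul_le_mul_of_nonneg_left (hM _ ?_) (by positivity [eps_pos hN])
  simp only [mem_union, mem_Icc] at hj ⊢
  lia

theorem abs_truncPrimitive_sub_le (hN : 0 < N) {k : ℤ}
    (hj : j ∈ Icc (-N + 1) (-K) ∪ Icc (K + 1) N)
    (hk : k ∈ Icc (-N + 1) (-K) ∪ Icc (K + 1) N) :
    |truncPrimitive N φ2F u j - truncPrimitive N φ2F u k| ≤ 2 * eps N * |φ2F| * M := by
  linarith [abs_sub (truncPrimitive N φ2F u j) (truncPrimitive N φ2F u k),
    abs_truncPrimitive_le (φ2F := φ2F) hM hN hj, abs_truncPrimitive_le (φ2F := φ2F) hM hN hk]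

theorem abs_sum_truncErr_mul_le_left (hK : 0 ≤ K) (hKN : K < N) {w : ℤ → ℝ}
    (hw : w (-N) = 0) :
    |∑ j ∈ Icc (-N + 1) (-K - 1), truncErr N K φF φ2F u j * w j| ≤
      2 * eps N * |φ2F| * M * ∑ j ∈ Icc (-N + 1) (-K - 1), |w j - w (j - 1)| := by
  rw [sum_congr rfl fun j hj => by rw [truncErr_eq_sub hK (mem_union_left _ hj)]]
  refine abs_sum_Icc_sub_mul_le_of_left_eq_zero (by lia : -N + 1 ≤ -K - 1 + 1)
    (by rwa [add_sub_cancel_right]) fun j hj => abs_truncPrimitive_sub_le hM (by lia) ?_ ?_ <;>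
      simp only [mem_union, mem_Icc] at hj ⊢ <;> lia

theorem abs_sum_truncErr_mul_le_right (hK : 0 ≤ K) (hKN : K < N) {w : ℤ → ℝ}
    (hw : w N = 0) :
    |∑ j ∈ Icc (K + 1) (N - 1), truncErr N K φF φ2F u j * w j| ≤
      2 * eps N * |φ2F| * M * ∑ j ∈ Icc (K + 2) N, |w j - w (j - 1)| := by
  rw [sum_congr rfl fun j hj => by rw [truncErr_eq_sub hK (mem_union_right _ hj)],
    show Icc (K + 2) N = Icc (K + 1 + 1) (N - 1 + 1) by
      rw [sub_add_cancel, add_assoc, one_add_one_eq_two]]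
  refine abs_sum_Icc_sub_mul_le_of_right_eq_zero (by lia : K + 1 ≤ N - 1 + 1)
    (by rwa [sub_add_cancel]) fun j hj => abs_truncPrimitive_sub_le hM (by lia) ?_ ?_ <;>
      simp only [mem_union, mem_Icc] at hj ⊢ <;> lia

theorem abs_sum_truncErr_mul_le (hK : 0 ≤ K) (hKN : K < N) {w : ℤ → ℝ}
    (hw₀ : w (-N) = 0) (hw₁ : w N = 0) :
    |∑ j ∈ Icc (-N) N, truncErr N K φF φ2F u j * w j| ≤
      2 * eps N * |φ2F| * M * ∑ j ∈ Icc (-N + 1) N, |w j - w (j - 1)| := by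
  have hN : 0 < N := by lia
  have hM₀ : 0 ≤ M :=
    (abs_nonneg _).trans (hM (K + 2) (by simp only [mem_union, mem_Icc]; lia))
  have hvar : ∑ j ∈ Icc (-N + 1) (-K - 1), |w j - w (j - 1)| +
      ∑ j ∈ Icc (K + 2) N, |w j - w (j - 1)| ≤
        ∑ j ∈ Icc (-N + 1) N, |w j - w (j - 1)| := by
    rw [← sum_union (disjoint_left.mpr fun x hx hx' => by simp only [mem_Icc] at hx hx'; lia)]
    exact sum_le_sum_of_subset_of_nonneg (fun x => by simp only [mem_union, mem_Icc]; lia)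
      fun _ _ _ => abs_nonneg _
  rw [sum_truncErr_mul_eq hK]
  refine (abs_add_le _ _).trans ((add_le_add (abs_sum_truncErr_mul_le_left hM hK hKN hw₀)
    (abs_sum_truncErr_mul_le_right hM hK hKN hw₁)).trans ?_)
  rw [← mul_add]
  exact mul_le_mul_of_nonneg_left hvar (mul_nonneg (by positivity [eps_pos hN]) hM₀)

end Bounds

end TruncErr

theorem qcf_truncation_negnorm_general (N K : ℤ) (hK : 2 ≤ K) (hKN : 2 * K ≤ N)
    (φF φ2F : ℝ) (u : ℤ → ℝ)
    (hneCt : ((Finset.Icc (-N+2) (-K+1)) ∪ (Finset.Icc (K+2) (N+1))).Nonempty) :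
    sSup { x : ℝ | ∃ w : ℤ → ℝ, w (-N) = 0 ∧ w N = 0 ∧
        eps N * ∑ j ∈ Finset.Icc (-N+1) N, |Dd N w j| = 1 ∧
        x = eps N * ∑ j ∈ Finset.Icc (-N) N, truncErr N K φF φ2F u j * w j } ≤
      2 * (eps N)^2 * |φ2F| *
        ((Finset.Icc (-N+2) (-K+1)) ∪ (Finset.Icc (K+2) (N+1))).sup' hneCt
          (fun j => |D3 N u j|) := by
  have hN : 0 < N := by lia
  have hM : ∀ j ∈ Icc (-N + 2) (-K + 1) ∪ Icc (K + 2) (N + 1), |D3 N u j| ≤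
      (Icc (-N + 2) (-K + 1) ∪ Icc (K + 2) (N + 1)).sup' hneCt fun j => |D3 N u j| :=
    fun j hj => le_sup' (fun j => |D3 N u j|) hj
  have hM₀ := (abs_nonneg _).trans (hM _ hneCt.choose_spec)
  refine Real.sSup_le ?_ (mul_nonneg (by positivity) hM₀)
  rintro x ⟨w, hw₀, hw₁, hnorm, rfl⟩
  simp only [mul_sum, eps_mul_abs_Dd hN] at hnorm
  calc eps N * ∑ j ∈ Icc (-N) N, truncErr N K φF φ2F u j * w j
      ≤ eps N * |∑ j ∈ Icc (-N) N, truncErr N K φF φ2F u j * w j| := by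
        gcongr
        exacts [(eps_pos hN).le, le_abs_self _]
    _ ≤ eps N * (2 * eps N * |φ2F| * _ * 1) := by
        gcongr
        · exact (eps_pos hN).le
        · exact hnorm ▸ abs_sum_truncErr_mul_le hM (by lia) (by lia) hw₀ hw₁
    _ = _ := by ring

/-- Negative-norm estimate for the truncation error:
`‖t‖_* ≤ 2 ε² |φ''_{2F}| ‖D³u^a‖_{ℓ∞(C̃)}`, where
`C̃ = {-N+2,…,-K+1} ∪ {K+2,…,N+1}`. -/
theorem qcf_truncation_negnorm (N K : ℤ) (hN : 1 ≤ N) (hK : 2 ≤ K) (hKN : 2 * K ≤ N)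
    (φF φ2F : ℝ) (u : ℤ → ℝ)
    (hneCt : ((Finset.Icc (-N+2) (-K+1)) ∪ (Finset.Icc (K+2) (N+1))).Nonempty) :
    sSup { x : ℝ | ∃ w : ℤ → ℝ, w (-N) = 0 ∧ w N = 0 ∧
        eps N * ∑ j ∈ Finset.Icc (-N+1) N, |Dd N w j| = 1 ∧
        x = eps N * ∑ j ∈ Finset.Icc (-N) N, truncErr N K φF φ2F u j * w j } ≤
      2 * (eps N)^2 * |φ2F| *
        ((Finset.Icc (-N+2) (-K+1)) ∪ (Finset.Icc (K+2) (N+1))).sup' hneCt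
          (fun j => |D3 N u j|) :=
  qcf_truncation_negnorm_general N K hK hKN φF φ2F u hneCt
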